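/- Let c ≥ 1, b ∈ ℝ, and α ≥ 12. Define ξ(x) = α/(x-b)² for x < b. Then for all s ≥ 0 and x < b: −(1/2)ξ''(x) + (1/4)ξ(x)² − c(c e^{-cs}∫₀ˢ e^{cs'} ds' · ξ(x) − ξ(x)) ≥ 0. -/

import Mathlib

/-!
The function `ξ x = α (x - b)⁻²` has `ξ'' = 6α (x - b)⁻⁴`, so with `u = (x - b)⁻²` the
diffusion and reaction terms combine to `α (α - 12) u² / 4 ≥ 0`. Since
`c e^{-cs} ∫₀ˢ e^{cs'} ds' = 1 - e^{-cs}`, the remaining term is `c e^{-cs} α u ≥ 0`.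
-/

open Real MeasureTheory intervalIntegral

theorem iter_deriv_const_mul_zpow_sub {𝕜 : Type*} [NontriviallyNormedField 𝕜]
    (a b : 𝕜) (m : ℤ) (k : ℕ) :
    deriv^[k] (fun x => a * (x - b) ^ m) =
      fun x => a * (∏ i ∈ Finset.range k, ((m : 𝕜) - i)) * (x - b) ^ (m - k) := by
  ext x
  rw [← iteratedDeriv_eq_iterate, iteratedDeriv_const_mul_field,
    iteratedDeriv_comp_sub_const (f := fun y => y ^ m), iteratedDeriv_eq_iterate]
  beta_reduce
  rw [iter_deriv_zpow, mul_assoc]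

theorem mul_exp_neg_mul_integral_exp {c : ℝ} (hc : c ≠ 0) (s : ℝ) :
    c * exp (-c * s) * ∫ t in (0 : ℝ)..s, exp (c * t) = 1 - exp (-c * s) := by
  rw [integral_comp_mul_left (fun t => exp t) hc, integral_exp, mul_zero, exp_zero, smul_eq_mul]
  field_simp
  rw [mul_sub, ← exp_add]
  ring_nf
  simp

theorem xi_is_supersolution (c b α : ℝ) (hc : 1 ≤ c) (hα : 12 ≤ α)
    (ξ : ℝ → ℝ) (hξ : ∀ x, ξ x = α / (x - b) ^ 2) :
    ∀ s ≥ (0:ℝ), ∀ x < b,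
      0 ≤ -(1 / 2) * deriv (deriv ξ) x + (1 / 4) * (ξ x) ^ 2 -
        c * (c * Real.exp (-c * s) * (∫ s' in (0:ℝ)..s, Real.exp (c * s')) * ξ x - ξ x) := by
  intro s _ x hx
  have hξ_zpow : ξ = fun x => α * (x - b) ^ (-2 : ℤ) := by
    ext x
    rw [hξ, zpow_neg, zpow_ofNat, div_eq_mul_inv]
  have hu : 0 < ((x - b) ^ 2)⁻¹ := by
    have := sub_ne_zero.2 hx.ne
    positivity
  set u := ((x - b) ^ 2)⁻¹
  have hξx : ξ x = α * u := by rw [hξ, div_eq_mul_inv]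
  have hξ'' : deriv (deriv ξ) x = 6 * α * u ^ 2 := by
    change deriv^[2] ξ x = _
    rw [hξ_zpow, iter_deriv_const_mul_zpow_sub]
    norm_num [Finset.prod_range_succ, u]
    ring
  rw [mul_exp_neg_mul_integral_exp (by positivity) s, hξ'', hξx]
  have key : -(1 / 2) * (6 * α * u ^ 2) + 1 / 4 * (α * u) ^ 2 -
      c * ((1 - exp (-c * s)) * (α * u) - α * u) =
      α * (α - 12) / 4 * u ^ 2 + c * exp (-c * s) * α * u := by
    ring
  have : 0 ≤ α - 12 := by linarith
  rw [key]
  positivity
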